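/- arXiv:2011.09989 — 2 statements merged into one kernel-verified Lean document; each statement's English description precedes it below -/
import Mathlib

section
/- Let t ≥ 4 be an even integer, and let n, r, a₁, …, a_{t/2−1} be integers satisfying n = t·((t/2)·r² + Σ_{j=1}^{t/2−1} (a_j² − 2a_j r)) + Σ_{j=1}^{t/2−1} (r − a_j)(t − 1 − 2j) + (t−1)r. Then 4tn = (2tr + t − 1)² + Σ_{j=1}^{t/2−1} (2tr + (t − 1 − 2j) − 2t·a_j)² − t(t² − 1)/6. -/
lemma sumOdd15 (m : ℕ) : 3 * ∑ j ∈ Finset.Icc 1 m, (2*(j:ℤ)-1)^2 = (m:ℤ)*(2*(m:ℤ)-1)*(2*(m:ℤ)+1) := by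
  induction m with
  | zero => simp
  | succ k ih =>
    rw [Finset.sum_Icc_succ_top (by omega)]
    push_cast
    push_cast at ih
    linear_combination ih

lemma sumRefl15 (m : ℕ) : ∑ j ∈ Finset.Icc 1 m, ((2*(m:ℤ)+1) - 2*j)^2
    = ∑ j ∈ Finset.Icc 1 m, (2*(j:ℤ)-1)^2 := by
  refine Finset.sum_nbij' (fun i => m + 1 - i) (fun i => m + 1 - i) ?_ ?_ ?_ ?_ ?_ <;>
    intro i hi <;> simp only [Finset.mem_Icc] at *
  · omega
  · omega
  · omega
  · omega
  · have : ((m + 1 - i : ℕ) : ℤ) = (m : ℤ) + 1 - i := by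
      have := hi.2; push_cast [Nat.cast_sub (by omega : i ≤ m + 1)]; ring
    rw [this]; ring

theorem stmt_15 (t : ℕ) (ht : 4 ≤ t) (hte : Even t) (n r : ℤ) (a : ℕ → ℤ)
    (hn : n = (t : ℤ) * ((t / 2 : ℕ) * r ^ 2
        + ∑ j ∈ Finset.Icc 1 (t / 2 - 1), ((a j) ^ 2 - 2 * a j * r))
      + ∑ j ∈ Finset.Icc 1 (t / 2 - 1), (r - a j) * ((t : ℤ) - 1 - 2 * j)
      + ((t : ℤ) - 1) * r) :
    4 * (t : ℤ) * n = (2 * t * r + t - 1) ^ 2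
      + ∑ j ∈ Finset.Icc 1 (t / 2 - 1), (2 * t * r + ((t : ℤ) - 1 - 2 * j) - 2 * t * a j) ^ 2
      - (t : ℤ) * ((t : ℤ) ^ 2 - 1) / 6 := by
  obtain ⟨m, hm⟩ := hte
  have hm' : t = 2 * m := by omega
  subst hm'
  have hm2 : 2 ≤ m := by omega
  have hdiv : 2 * m / 2 = m := by omega
  rw [hdiv] at hn ⊢
  -- value of the pure odd-square sum
  have hcast : ((m - 1 : ℕ) : ℤ) = (m : ℤ) - 1 := by
    push_cast [Nat.cast_sub (by omega : 1 ≤ m)]; ring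
  have hQval : 3 * ∑ j ∈ Finset.Icc 1 (m - 1), ((2*(m:ℤ)) - 1 - 2*(j:ℤ))^2
      = ((m:ℤ)-1)*(2*((m:ℤ)-1)-1)*(2*((m:ℤ)-1)+1) := by
    have h1 : ∑ j ∈ Finset.Icc 1 (m - 1), ((2*(m:ℤ)) - 1 - 2*(j:ℤ))^2
        = ∑ j ∈ Finset.Icc 1 (m - 1), ((2*((m-1 : ℕ):ℤ)+1) - 2*(j:ℤ))^2 := by
      refine Finset.sum_congr rfl fun j _ => ?_
      rw [hcast]; ring
    rw [h1, sumRefl15 (m - 1), sumOdd15 (m - 1), hcast]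
  -- division step
  have h6 : ((2*m : ℕ) : ℤ) * (((2*m : ℕ) : ℤ) ^ 2 - 1) / 6
      = ∑ j ∈ Finset.Icc 1 (m - 1), ((2*(m:ℤ)) - 1 - 2*(j:ℤ))^2 + ((2*(m:ℤ)) - 1)^2 := by
    have h : ((2*m : ℕ) : ℤ) * (((2*m : ℕ) : ℤ) ^ 2 - 1)
        = 6 * (∑ j ∈ Finset.Icc 1 (m - 1), ((2*(m:ℤ)) - 1 - 2*(j:ℤ))^2 + ((2*(m:ℤ)) - 1)^2) := by
      push_cast
      linear_combination (-2 : ℤ) * hQval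
    rw [h, Int.mul_ediv_cancel_left _ (by norm_num)]
  -- split the big sum
  have hsplit : ∑ j ∈ Finset.Icc 1 (m - 1),
        (2 * ((2*m : ℕ) : ℤ) * r + (((2*m : ℕ) : ℤ) - 1 - 2 * (j:ℤ)) - 2 * ((2*m : ℕ) : ℤ) * a j) ^ 2
      = ∑ j ∈ Finset.Icc 1 (m - 1),
          (4 * ((2*m : ℕ) : ℤ)^2 * ((a j)^2 - 2 * a j * r) + 4 * ((2*m : ℕ) : ℤ)^2 * r^2
           + 4 * ((2*m : ℕ) : ℤ) * ((r - a j) * (((2*m : ℕ) : ℤ) - 1 - 2 * (j:ℤ)))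
           + ((2*(m:ℤ)) - 1 - 2*(j:ℤ))^2) := by
    refine Finset.sum_congr rfl fun j _ => ?_
    push_cast
    ring
  rw [hsplit]
  simp only [Finset.sum_add_distrib, ← Finset.mul_sum, Finset.sum_const, Nat.card_Icc,
    nsmul_eq_mul]
  rw [h6]
  have hc : ((m - 1 + 1 - 1 : ℕ) : ℤ) = (m : ℤ) - 1 := by
    rw [Nat.add_sub_cancel]; exact hcast
  rw [hc]
  push_cast at hn ⊢
  linear_combination (8 * (m : ℤ)) * hn
end

section
/- Let t ≥ 3 be an odd integer, and let n, r, a₁, …, a_{(t−3)/2} be integers satisfying n = t·(r²·(t−1)/2 + Σ_{j=1}^{(t−3)/2} (a_j² − 2a_j r)) + Σ_{j=1}^{(t−3)/2} (t − 1 − 2j)(r − a_j) + (t−1)r. Then 4tn = (2tr + (t−1))² + Σ_{j=1}^{(t−3)/2} (2tr + (t − 1 − 2j) − 2t·a_j)² − t(t² − 1)/6. -/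
lemma aux_sq_sum (k : ℕ) (c : ℤ) :
    3 * ∑ j ∈ Finset.Icc 1 k, (c - 2 * (j : ℤ)) ^ 2
      = 3 * k * c ^ 2 - 6 * c * k * (k + 1) + 2 * k * (k + 1) * (2 * k + 1) := by
  induction k with
  | zero => simp
  | succ m ih =>
    rw [Finset.sum_Icc_succ_top (by omega), mul_add, ih]
    push_cast
    ring

theorem stmt_16 (t : ℕ) (ht : 3 ≤ t) (hto : Odd t) (n r : ℤ) (a : ℕ → ℤ)
    (hn : n = (t : ℤ) * (r ^ 2 * (((t : ℤ) - 1) / 2)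
        + ∑ j ∈ Finset.Icc 1 ((t - 3) / 2), ((a j) ^ 2 - 2 * a j * r))
      + ∑ j ∈ Finset.Icc 1 ((t - 3) / 2), ((t : ℤ) - 1 - 2 * j) * (r - a j)
      + ((t : ℤ) - 1) * r) :
    4 * (t : ℤ) * n = (2 * t * r + (t - 1)) ^ 2
      + ∑ j ∈ Finset.Icc 1 ((t - 3) / 2), (2 * t * r + ((t : ℤ) - 1 - 2 * j) - 2 * t * a j) ^ 2
      - (t : ℤ) * ((t : ℤ) ^ 2 - 1) / 6 := by
  obtain ⟨m, hm⟩ := hto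
  obtain ⟨k, hk⟩ : ∃ k, t = 2 * k + 3 := ⟨(t - 3) / 2, by omega⟩
  subst hk
  have hidx : (2 * k + 3 - 3) / 2 = k := by omega
  rw [hidx] at hn ⊢
  have hT : ((2 * k + 3 : ℕ) : ℤ) = 2 * (k : ℤ) + 3 := by push_cast; ring
  rw [hT] at hn ⊢
  have hd1 : (2 * (k : ℤ) + 3 - 1) / 2 = (k : ℤ) + 1 := by omega
  rw [hd1] at hn
  -- closed form for sum of squares of (2k+3-1-2j)
  have h4 : 3 * ∑ j ∈ Finset.Icc 1 k, (2 * (k : ℤ) + 3 - 1 - 2 * (j : ℤ)) ^ 2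
      = 3 * k * (2 * (k : ℤ) + 2) ^ 2 - 6 * (2 * (k : ℤ) + 2) * k * (k + 1)
        + 2 * k * (k + 1) * (2 * k + 1) := by
    have h := aux_sq_sum k (2 * (k : ℤ) + 3 - 1)
    calc 3 * ∑ j ∈ Finset.Icc 1 k, (2 * (k : ℤ) + 3 - 1 - 2 * (j : ℤ)) ^ 2
        = 3 * ∑ j ∈ Finset.Icc 1 k, ((2 * (k : ℤ) + 3 - 1) - 2 * (j : ℤ)) ^ 2 := rfl
      _ = 3 * k * (2 * (k : ℤ) + 3 - 1) ^ 2 - 6 * (2 * (k : ℤ) + 3 - 1) * k * (k + 1)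
            + 2 * k * (k + 1) * (2 * k + 1) := h
      _ = 3 * k * (2 * (k : ℤ) + 2) ^ 2 - 6 * (2 * (k : ℤ) + 2) * k * (k + 1)
            + 2 * k * (k + 1) * (2 * k + 1) := by ring
  -- expand the main sum termwise
  have h3 : ∑ j ∈ Finset.Icc 1 k,
        (2 * (2 * (k : ℤ) + 3) * r + (2 * (k : ℤ) + 3 - 1 - 2 * (j : ℤ))
          - 2 * (2 * (k : ℤ) + 3) * a j) ^ 2
      = 4 * (2 * (k : ℤ) + 3) ^ 2 * ∑ j ∈ Finset.Icc 1 k, ((a j) ^ 2 - 2 * a j * r)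
        + 4 * (2 * (k : ℤ) + 3)
            * ∑ j ∈ Finset.Icc 1 k, (2 * (k : ℤ) + 3 - 1 - 2 * (j : ℤ)) * (r - a j)
        + (k : ℤ) * (4 * (2 * (k : ℤ) + 3) ^ 2 * r ^ 2)
        + ∑ j ∈ Finset.Icc 1 k, (2 * (k : ℤ) + 3 - 1 - 2 * (j : ℤ)) ^ 2 := by
    rw [Finset.mul_sum, Finset.mul_sum]
    have hc : (k : ℤ) * (4 * (2 * (k : ℤ) + 3) ^ 2 * r ^ 2)
        = ∑ _j ∈ Finset.Icc 1 k, 4 * (2 * (k : ℤ) + 3) ^ 2 * r ^ 2 := by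
      rw [Finset.sum_const, Nat.card_Icc]
      simp [mul_comm]
    rw [hc, ← Finset.sum_add_distrib, ← Finset.sum_add_distrib, ← Finset.sum_add_distrib]
    exact Finset.sum_congr rfl fun j _ => by ring
  have hd2 : (2 * (k : ℤ) + 3) * ((2 * (k : ℤ) + 3) ^ 2 - 1) / 6
      = (2 * (k : ℤ) + 3 - 1) ^ 2
        + ∑ j ∈ Finset.Icc 1 k, (2 * (k : ℤ) + 3 - 1 - 2 * (j : ℤ)) ^ 2 := by
    have h6 : (2 * (k : ℤ) + 3) * ((2 * (k : ℤ) + 3) ^ 2 - 1)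
        = 6 * ((2 * (k : ℤ) + 3 - 1) ^ 2
            + ∑ j ∈ Finset.Icc 1 k, (2 * (k : ℤ) + 3 - 1 - 2 * (j : ℤ)) ^ 2) := by
      linear_combination (-2) * h4
    rw [h6, Int.mul_ediv_cancel_left _ (by norm_num)]
  rw [hd2, h3, hn]
  ring
end
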